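/- Let f(z) = z(1−z)(3−2z)/(4z²−6z+3) and let τ be the supremum of f over the interval [1/2, 1]. There exists n₀ such that the following holds for every real n ≥ n₀: if G is a finite bipartite graph with parts A and B and Val : A ∪ B → ℝ is a weight function satisfying (i) n/2 ≤ Val(v) ≤ n for every v ∈ A and 0 ≤ Val(v) < n/2 for every v ∈ B, (ii) Val(v) + Val(v') ≤ n for every edge vv' of G, (iii) deg(v) ≥ Val(v)·(Val(v)−3)/6 for every v ∈ A, and (iv) deg(v') ≤ (n − Val(v) − 1)(n − Val(v) − 2)/2 for every edge vv' of G with v ∈ A and v' ∈ B, then Σ_{v ∈ A ∪ B} Val(v) ≤ τ·n·(|A| + |B|). -/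

import Mathlib

/-!
Discharging: each `w ∈ B` spreads its surplus `τn - Val w ≥ 0` evenly over its edges. A vertex
`v ∈ A` with `x = Val v` has at least `x(x-3)/6` edges, and each brings it at least
`2(τn - n + x)/((n-x-1)(n-x-2))`, since the other end has value at most `n - x` and degree at most
`(n-x-1)(n-x-2)/2`. So `v` recovers its deficit `x - τn` once the cubic
`3(x - τn)(n-x-1)(n-x-2) - x(x-3)(x + τn - n)` in `n` is nonpositive. Writing `x = zn`, its
leading coefficient is `(fratio z - τ)(4z² - 6z + 3) ≤ 0`, which is where `τ` comes from, and a
polynomial bound in `z` controls the lower-order terms for `n ≥ 300`.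
-/

open Finset

/-- The rational function `z ↦ z(1-z)(3-2z)/(4z² - 6z + 3)`. -/
noncomputable def fratio (z : ℝ) : ℝ :=
  z * (1 - z) * (3 - 2 * z) / (4 * z ^ 2 - 6 * z + 3)

local notation "τ" => sSup (fratio '' Set.Icc (1 / 2 : ℝ) 1)

lemma fratio_denom_pos (z : ℝ) : 0 < 4 * z ^ 2 - 6 * z + 3 := by
  nlinarith [sq_nonneg (2 * z - 3 / 2)]

lemma bddAbove_fratio_image : BddAbove (fratio '' Set.Icc (1 / 2 : ℝ) 1) := by
  refine ⟨4 / 3, ?_⟩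
  rintro _ ⟨z, ⟨hz1, hz2⟩, rfl⟩
  rw [fratio, div_le_iff₀ (fratio_denom_pos z)]
  nlinarith [sq_nonneg (2 * z - 3 / 2)]

lemma fratio_le_tau {z : ℝ} (hz : z ∈ Set.Icc (1 / 2 : ℝ) 1) : fratio z ≤ τ :=
  le_csSup bddAbove_fratio_image ⟨z, hz, rfl⟩

lemma le_tau : (103 / 200 : ℝ) ≤ τ :=
  le_trans (by rw [fratio]; norm_num) (fratio_le_tau (z := 11 / 20) ⟨by norm_num, by norm_num⟩)

/-- The `n²`-coefficient `-12z(1-z) + 3t(3-2z)` of the cubic in `cubic_le` is at most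
`9 (t - fratio z) - 1/100`. -/
lemma second_coeff_le {z t : ℝ} (hz : z ∈ Set.Icc (1 / 2 : ℝ) 1) (ht : 103 / 200 ≤ t) :
    (-12 * z * (1 - z) + 3 * t * (3 - 2 * z) + 1 / 100) * (4 * z ^ 2 - 6 * z + 3)
      ≤ 9 * (t * (4 * z ^ 2 - 6 * z + 3) - z * (1 - z) * (3 - 2 * z)) := by
  obtain ⟨h1, h2⟩ := hz
  nlinarith [sq_nonneg (z - 539 / 1000), mul_nonneg (sub_nonneg.2 h1) (sub_nonneg.2 h2),
    mul_nonneg (mul_nonneg (sub_nonneg.2 h1) (sub_nonneg.2 h2)) (sub_nonneg.2 h2),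
    mul_nonneg (mul_nonneg (sub_nonneg.2 h1) (sub_nonneg.2 h1)) (sub_nonneg.2 h2),
    mul_nonneg (mul_nonneg (sub_nonneg.2 ht) (by linarith : (0 : ℝ) ≤ z))
      (fratio_denom_pos z).le]

lemma cubic_le {n z t : ℝ} (hn : 300 ≤ n) (hz : z ∈ Set.Icc (1 / 2 : ℝ) 1)
    (ht : 103 / 200 ≤ t) (hf : fratio z ≤ t) :
    3 * (z * n - t * n) * ((n - z * n - 1) * (n - z * n - 2))
      ≤ z * n * (z * n - 3) * (z * n + t * n - n) := by
  set D := 4 * z ^ 2 - 6 * z + 3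
  have hD : 0 < D := fratio_denom_pos z
  have hgap : 0 ≤ t * D - z * (1 - z) * (3 - 2 * z) := by
    rw [fratio, div_le_iff₀ hD] at hf
    linarith
  have hnD : 9 ≤ n * D := by nlinarith [sq_nonneg (2 * z - 3 / 2)]
  -- Times `D`, the cubic is `-n²(tD - N)(nD - 9) - nD(n/100 - 6(z - t))` plus `n²` times the
  -- (nonpositive) slack in `second_coeff_le`, where `N = z(1-z)(3-2z)`.
  have hlead : 0 ≤ (t * D - z * (1 - z) * (3 - 2 * z)) * (n ^ 2 * (n * D - 9)) :=
    mul_nonneg hgap (mul_nonneg (sq_nonneg n) (by linarith))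
  have hlow : 0 ≤ n * D * (n / 100 - 6 * (z - t)) :=
    mul_nonneg (by positivity) (by linarith [hz.2])
  refine le_of_sub_nonneg (nonneg_of_mul_nonneg_left ?_ hD)
  linear_combination n ^ 2 * second_coeff_le hz ht + hlead + hlow

lemma div_mem_Icc_half_one {n x : ℝ} (hn : 0 < n) (hx1 : n / 2 ≤ x) (hx2 : x ≤ n) :
    x / n ∈ Set.Icc (1 / 2 : ℝ) 1 :=
  ⟨by rw [le_div_iff₀ hn]; linarith, by rwa [div_le_one hn]⟩

lemma sum_le_sum_of_discharge {β : Type*} [DecidableEq β] {A B : Finset β}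
    {E : Finset (β × β)} (hE : ∀ e ∈ E, e.1 ∈ A ∧ e.2 ∈ B) (g : β × β → ℝ) {a b : β → ℝ}
    (ha : ∀ v ∈ A, a v ≤ ∑ e ∈ E with e.1 = v, g e)
    (hb : ∀ w ∈ B, ∑ e ∈ E with e.2 = w, g e ≤ b w) :
    ∑ v ∈ A, a v ≤ ∑ w ∈ B, b w :=
  calc ∑ v ∈ A, a v ≤ ∑ v ∈ A, ∑ e ∈ E with e.1 = v, g e := sum_le_sum ha
    _ = ∑ w ∈ B, ∑ e ∈ E with e.2 = w, g e := by
      rw [sum_fiberwise_of_maps_to (fun e he => (hE e he).1),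
        sum_fiberwise_of_maps_to (fun e he => (hE e he).2)]
    _ ≤ ∑ w ∈ B, b w := sum_le_sum hb

lemma sum_div_card_le {α : Type*} (s : Finset α) {c : ℝ} (hc : 0 ≤ c) :
    ∑ _x ∈ s, c / (#s : ℝ) ≤ c := by
  rw [sum_const, nsmul_eq_mul]
  rcases s.eq_empty_or_nonempty with rfl | hs
  · simpa using hc
  · field_simp [hs.card_pos.ne']
    exact le_rfl

section Discharging

variable {β : Type*} [DecidableEq β] {E : Finset (β × β)} {Val : β → ℝ}

/-- The share of the surplus `c - Val w` that `w` sends along the edge `e = (v, w)`. -/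
noncomputable def charge (E : Finset (β × β)) (Val : β → ℝ) (c : ℝ) (e : β × β) : ℝ :=
  (c - Val e.2) / ((E.filter fun e' => e'.2 = e.2).card : ℝ)

lemma one_le_card_filter_snd {e : β × β} (he : e ∈ E) :
    (1 : ℝ) ≤ ((E.filter fun e' => e'.2 = e.2).card : ℝ) := by
  have he' : e ∈ E.filter fun e' => e'.2 = e.2 := mem_filter.2 ⟨he, rfl⟩
  exact Nat.one_le_cast.2 (card_pos.2 ⟨e, he'⟩)

lemma sum_charge_le {c : ℝ} {w : β} (hw : Val w ≤ c) :
    ∑ e ∈ E with e.2 = w, charge E Val c e ≤ c - Val w := by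
  rw [sum_congr rfl fun e he => by rw [charge, (mem_filter.1 he).2]]
  exact sum_div_card_le _ (sub_nonneg.2 hw)

lemma div_le_charge {n c : ℝ} {e : β × β} (he : e ∈ E) (hsurplus : 0 ≤ c - n + Val e.1)
    (hEdge : Val e.1 + Val e.2 ≤ n)
    (hdeg : ((E.filter fun e' => e'.2 = e.2).card : ℝ)
      ≤ (n - Val e.1 - 1) * (n - Val e.1 - 2) / 2) :
    2 * (c - n + Val e.1) / ((n - Val e.1 - 1) * (n - Val e.1 - 2)) ≤ charge E Val c e := by
  have hd1 := one_le_card_filter_snd he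
  calc 2 * (c - n + Val e.1) / ((n - Val e.1 - 1) * (n - Val e.1 - 2))
      = (c - n + Val e.1) / ((n - Val e.1 - 1) * (n - Val e.1 - 2) / 2) := by
        rw [div_div_eq_mul_div, mul_comm]
    _ ≤ (c - n + Val e.1) / ((E.filter fun e' => e'.2 = e.2).card : ℝ) := by gcongr
    _ ≤ charge E Val c e := by
      rw [charge]
      gcongr
      linarith

lemma sub_le_sum_charge {n t : ℝ} {v : β} (hn : 300 ≤ n) (ht : 103 / 200 ≤ t)
    (hf : fratio (Val v / n) ≤ t) (hv : n / 2 ≤ Val v ∧ Val v ≤ n)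
    (hEdge : ∀ e ∈ E, Val e.1 + Val e.2 ≤ n)
    (hdeg : Val v * (Val v - 3) / 6 ≤ ((E.filter fun e => e.1 = v).card : ℝ))
    (hdegB : ∀ e ∈ E, ((E.filter fun e' => e'.2 = e.2).card : ℝ)
      ≤ (n - Val e.1 - 1) * (n - Val e.1 - 2) / 2) :
    Val v - t * n ≤ ∑ e ∈ E with e.1 = v, charge E Val (t * n) e := by
  obtain ⟨hx1, hx2⟩ := hv
  set x := Val v
  set P := (n - x - 1) * (n - x - 2)
  have hn0 : 0 < n := by linarith
  have hs : (E.filter fun e => e.1 = v).Nonempty := by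
    rw [← card_pos, ← Nat.cast_pos (α := ℝ)]
    nlinarith
  obtain ⟨e₀, he₀⟩ := hs
  have hP : 2 ≤ P := by
    have := hdegB e₀ (mem_filter.1 he₀).1
    rw [(mem_filter.1 he₀).2] at this
    linarith [one_le_card_filter_snd (mem_filter.1 he₀).1]
  have hsurplus : 0 ≤ t * n - n + x := by nlinarith
  have hedge : ∀ e ∈ E.filter (fun e => e.1 = v),
      2 * (t * n - n + x) / P ≤ charge E Val (t * n) e := by
    intro e he
    obtain ⟨heE, rfl⟩ := mem_filter.1 he
    exact div_le_charge heE hsurplus (hEdge e heE) (hdegB e heE)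
  have hkey : x - t * n ≤ x * (x - 3) / 6 * (2 * (t * n - n + x) / P) := by
    have hcubic : 3 * (x - t * n) * P ≤ x * (x - 3) * (x + t * n - n) := by
      have := cubic_le hn (div_mem_Icc_half_one hn0 hx1 hx2) ht hf
      rwa [div_mul_cancel₀ x hn0.ne'] at this
    clear_value P
    rw [show x * (x - 3) / 6 * (2 * (t * n - n + x) / P) = x * (x - 3) * (x + t * n - n) / (3 * P)
      by ring, le_div_iff₀ (by positivity)]
    linarith
  calc x - t * n ≤ x * (x - 3) / 6 * (2 * (t * n - n + x) / P) := hkey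
    _ ≤ ((E.filter fun e => e.1 = v).card : ℝ) * (2 * (t * n - n + x) / P) :=
      mul_le_mul_of_nonneg_right hdeg (div_nonneg (by linarith) (by linarith))
    _ ≤ ∑ e ∈ E with e.1 = v, charge E Val (t * n) e := by
      simpa using card_nsmul_le_sum _ _ _ hedge

end Discharging

/-- A bipartite graph with parts `A` and `B` is given by its edge set `E ⊆ A × B`. -/
theorem statement_13 :
    ∃ n₀ : ℝ, ∀ n : ℝ, n₀ ≤ n →
      ∀ (β : Type) (_ : DecidableEq β) (A B : Finset β) (E : Finset (β × β)) (Val : β → ℝ),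
        Disjoint A B →
        (∀ e ∈ E, e.1 ∈ A ∧ e.2 ∈ B) →
        (∀ v ∈ A, n / 2 ≤ Val v ∧ Val v ≤ n) →
        (∀ v ∈ B, 0 ≤ Val v ∧ Val v < n / 2) →
        (∀ e ∈ E, Val e.1 + Val e.2 ≤ n) →
        (∀ v ∈ A, Val v * (Val v - 3) / 6 ≤ ((E.filter fun e => e.1 = v).card : ℝ)) →
        (∀ e ∈ E, ((E.filter fun e' => e'.2 = e.2).card : ℝ)
            ≤ (n - Val e.1 - 1) * (n - Val e.1 - 2) / 2) →
        ∑ v ∈ A ∪ B, Val v ≤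
          (sSup (fratio '' Set.Icc (1 / 2 : ℝ) 1)) * n * ((A.card : ℝ) + (B.card : ℝ)) := by
  refine ⟨300, fun n hn β _ A B E Val hAB hE hA hB hEdge hdegA hdegB => ?_⟩
  have hτ := le_tau
  have hn0 : 0 < n := by linarith
  have hdischarge := sum_le_sum_of_discharge hE (charge E Val (τ * n))
    (a := fun v => Val v - τ * n) (b := fun w => τ * n - Val w)
    (fun v hv => sub_le_sum_charge hn hτ
      (fratio_le_tau (div_mem_Icc_half_one hn0 (hA v hv).1 (hA v hv).2)) (hA v hv) hEdge
      (hdegA v hv) hdegB)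
    (fun w hw => sum_charge_le (by nlinarith [hB w hw]))
  simp only [sum_sub_distrib, sum_const, nsmul_eq_mul] at hdischarge
  rw [sum_union hAB]
  linarith
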